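/- (T. L. Heath) Every even perfect number other than 6 can be written as the sum of consecutive odd cubes beginning with 1; that is, if N is an even perfect number with N ≠ 6, then there exists a natural number n ≥ 1 such that N = ∑_{k=1}^{n} (2k − 1)³. -/

import Mathlib

open ArithmeticFunction Finset Nat
open scoped ArithmeticFunction.sigma

/-! By Euclid–Euler an even perfect number is `2 ^ k * (2 ^ (k + 1) - 1)` with `2 ^ (k + 1) - 1`
prime, so `k + 1` is prime. Apart from `k + 1 = 2`, i.e. `N = 6`, it is odd; then `k = 2 m` and
with `n = 2 ^ m` we get `N = n² (2 n² - 1)`, the sum of the first `n` odd cubes. -/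

theorem sigma_one_two_pow_eq_mersenne_succ (k : ℕ) : σ 1 (2 ^ k) = mersenne (k + 1) := by
  simp_rw [sigma_one_apply, mersenne, show 2 = 1 + 1 from rfl, ← geom_sum_mul_add 1 (k + 1)]
  norm_num

theorem Nat.Perfect.exists_eq_two_pow_mul_mersenne {n : ℕ} (hperf : n.Perfect) (heven : Even n) :
    ∃ k, (mersenne (k + 1)).Prime ∧ n = 2 ^ k * mersenne (k + 1) := by
  obtain ⟨k, m, hm, rfl⟩ := exists_eq_two_pow_mul_odd hperf.2.ne'
  have hcop : Coprime (2 ^ (k + 1)) (mersenne (k + 1)) :=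
    (Nat.coprime_two_left.2 (mersenne_odd.2 k.succ_ne_zero)).pow_left _
  have hσ : mersenne (k + 1) * σ 1 m = 2 ^ (k + 1) * m := by
    have := (perfect_iff_sum_divisors_eq_two_mul hperf.2).1 hperf
    rw [← sigma_one_apply, isMultiplicative_sigma.map_mul_of_coprime
      ((Nat.coprime_two_left.2 hm).pow_left _), sigma_one_two_pow_eq_mersenne_succ] at this
    rw [this]
    ring
  obtain ⟨j, hj⟩ : 2 ^ (k + 1) ∣ σ 1 m := hcop.dvd_of_dvd_mul_left ⟨m, hσ⟩
  have hmj : m = mersenne (k + 1) * j := by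
    rw [hj, mul_left_comm] at hσ
    exact (Nat.eq_of_mul_eq_mul_left (by positivity) hσ).symm
  -- `σ m = 2 ^ (k + 1) j = m + j`, so the proper divisors of `m` add up to its divisor `j`.
  have hproper : ∑ i ∈ m.properDivisors, i = j := by
    have := sum_divisors_eq_sum_properDivisors_add_self (n := m)
    rw [← sigma_one_apply, hj, ← succ_mersenne, add_mul, one_mul, ← hmj, add_comm] at this
    omega
  rcases sum_properDivisors_dvd (hproper ▸ Dvd.intro_left _ hmj.symm) with hsum_one | hsum_self
  · have hprime := sum_properDivisors_eq_one_iff_prime.1 hsum_one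
    rw [hproper] at hsum_one
    subst hsum_one
    rw [mul_one] at hmj
    exact ⟨k, hmj ▸ hprime, by rw [hmj]⟩
  · have hM : mersenne (k + 1) = mersenne 1 := by
      rw [hproper] at hsum_self
      exact (Nat.mul_eq_right hm.pos.ne').1 (hsum_self ▸ hmj).symm
    obtain rfl : k = 0 := by simpa using strictMono_mersenne.injective hM
    exact absurd (by simpa using heven) (not_even_iff_odd.2 hm)

theorem sum_Icc_odd_cube_add_sq (n : ℕ) :
    ∑ k ∈ Icc 1 n, (2 * k - 1) ^ 3 + n ^ 2 = 2 * n ^ 4 := by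
  induction n with
  | zero => simp
  | succ n ih =>
    rw [sum_Icc_succ_top (by omega), show 2 * (n + 1) - 1 = 2 * n + 1 by omega]
    nlinarith [ih]

theorem sum_Icc_odd_cube (n : ℕ) :
    ∑ k ∈ Icc 1 n, (2 * k - 1) ^ 3 = n ^ 2 * (2 * n ^ 2 - 1) := by
  have h := sum_Icc_odd_cube_add_sq n
  have : n ^ 2 * (2 * n ^ 2) = 2 * n ^ 4 := by ring
  rw [Nat.mul_sub_one]
  omega

theorem even_perfect_sum_consecutive_odd_cubes (N : ℕ) (hperf : Nat.Perfect N)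
    (heven : Even N) (hne : N ≠ 6) :
    ∃ n : ℕ, 1 ≤ n ∧ N = ∑ k ∈ Finset.Icc 1 n, (2 * k - 1) ^ 3 := by
  obtain ⟨k, hprime, rfl⟩ := hperf.exists_eq_two_pow_mul_mersenne heven
  obtain ⟨m, rfl⟩ : Even k := by
    rcases hprime.of_mersenne.eq_two_or_odd' with h | h
    · obtain rfl : k = 1 := by omega
      exact absurd rfl hne
    · simpa [parity_simps] using h
  refine ⟨2 ^ m, Nat.one_le_two_pow, ?_⟩
  rw [sum_Icc_odd_cube, mersenne, pow_succ', ← two_mul, pow_mul', sq]
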